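/- Let P and S be edge-weighted path complexes, fix p ∈ ℕ, and let P̄ = Δ(P_p ∪ P_{p+1}) and S̄ = Δ(S_p ∪ S_{p+1}) with the inherited edge weights. Suppose there are weak morphisms φ : P̄ → S̄ and ψ : S̄ → P̄ with weak one-step homotopy chains ψ∘φ = f_0 ∼₁ f_1 ∼₁ … ∼₁ f_m = id_{P̄} and φ∘ψ = g_0 ∼₁ g_1 ∼₁ … ∼₁ g_m = id_{S̄}. Set η = max{ max_{i=1,…,p+1} dis_i(φ), max_{i=1,…,p+1} dis_i(ψ), ½·max_{k=1,…,m} ( max_{l=0,…,p} [dis_l(f_{k−1}) + dis_{p−l}(f_k)] + cod(f_{k−1}, f_k) ), ½·max_{k=1,…,m} ( max_{l=0,…,p} [dis_l(g_{k−1}) + dis_{p−l}(g_k)] + cod(g_{k−1}, g_k) ) }. Then for every field K, the persistence modules δ ↦ H_p(P̄^δ) and δ ↦ H_p(S̄^δ) (indexed by δ ∈ [0, ∞), path sublevel filtration, structure maps induced by inclusions) are η-interleaved, via the maps induced on path homology by φ and ψ. -/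

import Mathlib

/-!
The maps induced by `φ` and `ψ` lengthen paths of degree `≤ p + 1` by at most `η`, so they carry
the cycles and boundaries of the `δ`-sublevel complexes into those of the `(δ + η)`-sublevel
complexes. For the composites, let `F : P̄ × I → P̄` realise a step `f ∼₁ g` and let `C` send a
path `i₀ … iₙ` to the alternating sum of its prism paths `i₀ … i_k i_k' … iₙ'`. The prism
identity `∂C + C∂ = ι₁ − ι₀` gives `∂ F_*(C z) = g_* z − f_* z` for a `p`-cycle `z`. The image
of a prism path over a path of length `≤ δ` has length
`≤ δ + dis_k(f) + dis_{p−k}(g) + cod(f, g) ≤ δ + 2η`, so `g_* z − f_* z` is a boundary at level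
`δ + 2η`, and summing along the chain `ψ ∘ φ = f₀ ∼₁ ⋯ ∼₁ f_m = id` bounds `ψ_* φ_* z − z`.

All identities are proved for raw chains of lists and then projected to regular chains. The
projection commutes with `∂`: in a path with a repeated vertex `x x`, the two faces deleting
either copy cancel and every other face keeps the repetition.
-/

open scoped Classical

namespace PH

/-- An elementary path (a list of vertices) is regular if no two consecutive
vertices coincide. -/
def Reg {V : Type} (l : List V) : Prop := l.Chain' (· ≠ ·)

/-- The regular boundary operator ∂ on the span of regular paths (all degrees at once,
with the convention that ∂ vanishes on 0-paths): on a basis path `p` of length ≥ 2 it is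
the alternating sum of the vertex deletions, with non-regular terms replaced by 0. -/
noncomputable def dReg (K : Type) [Field K] (V : Type) :
    (List V →₀ K) →ₗ[K] (List V →₀ K) :=
  Finsupp.lsum K fun p => LinearMap.toSpanSingleton K (List V →₀ K)
    (if 2 ≤ p.length then
      ∑ q : Fin p.length, ((-1 : K) ^ (q : ℕ)) •
        (if Reg (p.eraseIdx (q : ℕ)) then Finsupp.single (p.eraseIdx (q : ℕ)) (1 : K) else 0)
    else 0)

/-- The map induced on regular chains by a vertex map f:
`e_{i₀…iₙ} ↦ e_{f(i₀)…f(iₙ)}` if the image path is regular, and 0 otherwise. -/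
noncomputable def find (K : Type) [Field K] {V W : Type} (f : V → W) :
    (List V →₀ K) →ₗ[K] (List W →₀ K) :=
  Finsupp.lsum K fun p => LinearMap.toSpanSingleton K (List W →₀ K)
    (if Reg (p.map f) then Finsupp.single (p.map f) (1 : K) else 0)

/-- `A_n(P)`: the span of the regular allowed n-paths (lists of n+1 vertices in P). -/
def Asub (K : Type) [Field K] {V : Type} (P : Set (List V)) (n : ℕ) :
    Submodule K (List V →₀ K) :=
  Finsupp.supported K K {l | l ∈ P ∧ l.length = n + 1 ∧ Reg l}

/-- `Ω_n(P)`: the ∂-invariant allowed regular n-chains. -/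
noncomputable def OmegaSub (K : Type) [Field K] {V : Type} (P : Set (List V)) (n : ℕ) :
    Submodule K (List V →₀ K) :=
  Asub K P n ⊓ Submodule.comap (dReg K V) (Asub K P (n - 1))

/-- The n-cycles of Ω_*(P). -/
noncomputable def Zsub (K : Type) [Field K] {V : Type} (P : Set (List V)) (n : ℕ) :
    Submodule K (List V →₀ K) :=
  OmegaSub K P n ⊓ LinearMap.ker (dReg K V)

/-- The n-boundaries ∂Ω_{n+1}(P). -/
noncomputable def Bsub (K : Type) [Field K] {V : Type} (P : Set (List V)) (n : ℕ) :
    Submodule K (List V →₀ K) :=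
  Submodule.map (dReg K V) (OmegaSub K P (n + 1))

/-- Path homology `H_n(P)`, realized as the image of the n-cycles in the quotient of the
ambient space by the n-boundaries (so `H_n(P) ≅ Z_n/(Z_n ∩ B_n) = Z_n/B_n`). -/
noncomputable def Hsm (K : Type) [Field K] {V : Type} (P : Set (List V)) (n : ℕ) :
    Submodule K ((List V →₀ K) ⧸ Bsub K P n) :=
  Submodule.map (Bsub K P n).mkQ (Zsub K P n)

/-- A path complex on V: a set of non-empty elementary paths (lists) closed under
removing the last (`dropLast`) or the first (`tail`) vertex. -/
structure PathComplex (V : Type) where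
  carrier : Set (List V)
  not_nil : ∀ p ∈ carrier, p ≠ []
  dropLast_mem : ∀ p ∈ carrier, 2 ≤ p.length → p.dropLast ∈ carrier
  tail_mem : ∀ p ∈ carrier, 2 ≤ p.length → p.tail ∈ carrier

end PH

namespace PH

/-- A weak morphism of path complexes: the image of every allowed path is allowed or
non-regular. -/
def IsWeakMor {V W : Type} (P : Set (List V)) (S : Set (List W)) (f : V → W) : Prop :=
  ∀ p ∈ P, p.map f ∈ S ∨ ¬ Reg (p.map f)

/-- The paths of the cylinder path complex P × I on V ⊕ V. -/
def cylSet {V : Type} (P : Set (List V)) : Set (List (V ⊕ V)) :=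
  {l | (∃ p ∈ P, l = p.map Sum.inl) ∨ (∃ p ∈ P, l = p.map Sum.inr) ∨
       (∃ p ∈ P, ∃ k : ℕ, k < p.length ∧
          l = (p.take (k + 1)).map Sum.inl ++ (p.drop k).map Sum.inr)}

/-- Weak one-step homotopy f ∼₁ g via a weak morphism from the cylinder restricting to
f and g (in either order) on the two ends. -/
def WOneStep {V W : Type} (P : Set (List V)) (S : Set (List W)) (f g : V → W) : Prop :=
  ∃ F : V ⊕ V → W, IsWeakMor (cylSet P) S F ∧
    (((∀ v : V, F (Sum.inl v) = f v) ∧ (∀ v : V, F (Sum.inr v) = g v)) ∨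
     ((∀ v : V, F (Sum.inl v) = g v) ∧ (∀ v : V, F (Sum.inr v) = f v)))

/-- Δ(A): the path complex generated by a set A of elementary paths (the closure of A
under front and back truncation, i.e. the non-empty infix subwords of paths of A). -/
def genPC {V : Type} (A : Set (List V)) : PathComplex V where
  carrier := {q | q ≠ [] ∧ ∃ p ∈ A, q <:+: p}
  not_nil := fun p hp => hp.1
  dropLast_mem := by
    rintro p ⟨hne, q, hq, hinf⟩ hlen
    refine ⟨?_, q, hq, (List.dropLast_prefix p).isInfix.trans hinf⟩
    have : 0 < p.dropLast.length := by rw [List.length_dropLast]; omega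
    exact List.ne_nil_of_length_pos this
  tail_mem := by
    rintro p ⟨hne, q, hq, hinf⟩ hlen
    refine ⟨?_, q, hq, (List.tail_suffix p).isInfix.trans hinf⟩
    have : 0 < p.tail.length := by rw [List.length_tail]; omega
    exact List.ne_nil_of_length_pos this

/-- The length of a path with respect to edge weights w: the sum of the weights of its
consecutive edges (0 for a single vertex). -/
noncomputable def len {V : Type} (w : V → V → ℝ) (l : List V) : ℝ :=
  (List.zipWith w l l.tail).sum

/-- The path sublevel filtration P^δ of an edge-weighted path complex:
P^δ₀ = P₀ and, in positive degrees, the allowed paths of length ≤ δ. -/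
def subPC {V : Type} (P : Set (List V)) (w : V → V → ℝ) (δ : ℝ) : Set (List V) :=
  {l | l ∈ P ∧ (l.length = 1 ∨ len w l ≤ δ)}

/-- dis_n(φ) for a weak morphism of edge-weighted path complexes (0 for n = 0, and the
max over the empty set is 0). -/
noncomputable def disN {V W : Type} (P : Set (List V)) (wP : V → V → ℝ) (wS : W → W → ℝ)
    (φ : V → W) (n : ℕ) : ℝ :=
  sSup (insert 0 {d : ℝ | ∃ e ∈ P, e.length = n + 1 ∧ Reg (e.map φ) ∧
    d = |len wS (e.map φ) - len wP e|})

/-- cod(φ, ψ): the maximal weight of an allowed edge of the target of the form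
φ(x)ψ(x) or ψ(x)φ(x) (0 if there is none). -/
noncomputable def codP {V W : Type} (S : Set (List W)) (wS : W → W → ℝ)
    (φ ψ : V → W) : ℝ :=
  sSup (insert 0 ({d : ℝ | ∃ x : V, [φ x, ψ x] ∈ S ∧ d = wS (φ x) (ψ x)} ∪
                  {d : ℝ | ∃ x : V, [ψ x, φ x] ∈ S ∧ d = wS (ψ x) (φ x)}))

end PH

namespace PH

namespace PathComplex

variable {V : Type} (P : PathComplex V)

theorem drop_mem {l : List V} (hl : l ∈ P.carrier) : ∀ {n : ℕ}, n < l.length → l.drop n ∈ P.carrier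
  | 0, _ => hl
  | n + 1, hn => by
    rw [← List.tail_drop]
    exact P.tail_mem _ (drop_mem hl (by omega)) (by simp only [List.length_drop]; omega)

theorem take_mem {l : List V} (hl : l ∈ P.carrier) :
    ∀ {n : ℕ}, 0 < n → l.take n ∈ P.carrier := by
  suffices ∀ d n, 0 < n → l.length = n + d → l.take n ∈ P.carrier from
    fun {n} hn => if h : l.length ≤ n then by rwa [List.take_of_length_le h]
      else this _ n hn (Nat.add_sub_of_le (by omega)).symm
  intro d
  induction d with
  | zero => intro n _ h; rwa [List.take_of_length_le (by omega)]
  | succ d ih =>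
    intro n hn h
    have hdrop := P.dropLast_mem _ (ih (n + 1) (by omega) (by omega))
      (by simp only [List.length_take]; omega)
    rwa [List.dropLast_eq_take, List.take_take, List.length_take,
      show min (min (n + 1) l.length - 1) (n + 1) = n by omega] at hdrop

theorem mem_of_infix {q l : List V} (hl : l ∈ P.carrier) (hq : q <:+: l) (hne : q ≠ []) :
    q ∈ P.carrier := by
  obtain ⟨t, hqt, htl⟩ := List.infix_iff_prefix_suffix.1 hq
  have htlen := htl.length_le
  have htne : t ≠ [] := by rintro rfl; exact hne (List.prefix_nil.1 hqt)
  rw [List.suffix_iff_eq_drop] at htl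
  rw [List.prefix_iff_eq_take] at hqt
  rw [hqt]
  refine P.take_mem ?_ (List.length_pos_iff.2 hne)
  rw [htl]
  exact P.drop_mem hl (by have := List.length_pos_iff.2 htne; omega)

end PathComplex

section Regularity

variable {V W : Type}

theorem Reg.of_map (f : V → W) {l : List V} (h : Reg (l.map f)) : Reg l :=
  ((List.isChain_map f).1 h).imp fun {_ _} hab e => hab (congrArg f e)

theorem Reg.tail {x : V} {t : List V} (h : Reg (x :: t)) : Reg t :=
  (List.isChain_cons.1 h).2

theorem not_reg_cons_cons_self (x : V) (t : List V) : ¬ Reg (x :: x :: t) :=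
  fun h => (List.isChain_cons.1 h).1 x rfl rfl

end Regularity

section Length

variable {V : Type} (w : V → V → ℝ)

theorem len_cons_cons (a b : V) (t : List V) : len w (a :: b :: t) = w a b + len w (b :: t) := by
  simp [len]

theorem len_of_length_eq_one {l : List V} (h : l.length = 1) : len w l = 0 := by
  obtain ⟨a, rfl⟩ := List.length_eq_one_iff.1 h
  rfl

theorem len_take_add_len_drop :
    ∀ (k : ℕ) (l : List V), k < l.length → len w (l.take (k + 1)) + len w (l.drop k) = len w l
  | 0, a :: t, _ => by simp [len]
  | k + 1, a :: b :: t, h => by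
    have ih := len_take_add_len_drop k (b :: t) (by simpa using h)
    simp only [List.take_succ_cons, List.drop_succ_cons] at ih ⊢
    rw [len_cons_cons, len_cons_cons, ← ih, add_assoc]
  | k + 1, [_], h => by simp at h

theorem len_append_cons :
    ∀ (x : List V) (a : V) (y : List V), len w (x ++ a :: y) = len w (x ++ [a]) + len w (a :: y)
  | [], _, _ => by simp [len]
  | [c], a, y => by simp [len]
  | c :: d :: x, a, y => by
    simp only [List.cons_append] at *
    rw [len_cons_cons, len_cons_cons, ← List.cons_append, len_append_cons (d :: x) a y,
      List.cons_append]
    ring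

end Length

section Prism

variable {V W : Type}

/-- The path `i₀ … i_k i_k' … iₙ'` of the cylinder over `l = i₀ … iₙ`. -/
def prismPath (l : List V) (k : ℕ) : List (V ⊕ V) :=
  (l.take (k + 1)).map Sum.inl ++ (l.drop k).map Sum.inr

theorem length_prismPath {l : List V} {k : ℕ} (hk : k < l.length) :
    (prismPath l k).length = l.length + 1 := by
  simp only [prismPath, List.length_append, List.length_map, List.length_take, List.length_drop]
  omega

theorem prismPath_cons_zero (a : V) (s : List V) :
    prismPath (a :: s) 0 = Sum.inl a :: Sum.inr a :: s.map Sum.inr := rfl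

theorem prismPath_cons_succ (a : V) (s : List V) (k : ℕ) :
    prismPath (a :: s) (k + 1) = Sum.inl a :: prismPath s k := rfl

theorem map_prismPath {F : V ⊕ V → W} {f g : V → W}
    (hFl : ∀ v, F (Sum.inl v) = f v) (hFr : ∀ v, F (Sum.inr v) = g v) (l : List V) (k : ℕ) :
    (prismPath l k).map F = (l.take (k + 1)).map f ++ (l.drop k).map g := by
  simp [prismPath, List.map_map, (funext hFl : F ∘ Sum.inl = f), (funext hFr : F ∘ Sum.inr = g)]

theorem Reg.of_map_prismPath (F : V ⊕ V → W) {l : List V} {k : ℕ} (hk : k < l.length)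
    (h : Reg ((prismPath l k).map F)) : Reg l := by
  have h' := h.of_map F
  have hb : Reg (l.take (k + 1)) := Reg.of_map Sum.inl (h'.prefix (List.prefix_append _ _))
  have ht : Reg (l.drop k) := Reg.of_map Sum.inr (h'.suffix (List.suffix_append _ _))
  rw [List.take_add_one, List.getElem?_eq_getElem hk, Option.toList_some] at hb
  rw [List.drop_eq_getElem_cons hk, ← List.singleton_append] at ht
  have := hb.append_overlap ht (List.cons_ne_nil _ _)
  rwa [List.append_assoc, List.singleton_append, ← List.drop_eq_getElem_cons hk,
    List.take_append_drop] at this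

theorem map_take_append_map_drop (f g : V → W) {l : List V} {k : ℕ} (hk : k < l.length) :
    (l.take (k + 1)).map f ++ (l.drop k).map g =
      (l.take k).map f ++ f l[k] :: g l[k] :: (l.drop (k + 1)).map g := by
  rw [List.take_add_one, List.getElem?_eq_getElem hk, List.drop_eq_getElem_cons hk]
  simp only [Option.toList_some, List.map_append, List.map_cons, List.map_nil, List.append_assoc,
    List.singleton_append]

theorem len_map_take_append_map_drop (w : W → W → ℝ) (f g : V → W) {l : List V} {k : ℕ}
    (hk : k < l.length) :
    len w ((l.take (k + 1)).map f ++ (l.drop k).map g) =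
      len w ((l.take (k + 1)).map f) + w (f l[k]) (g l[k]) + len w ((l.drop k).map g) := by
  have hf : (l.take (k + 1)).map f = (l.take k).map f ++ [f l[k]] := by
    rw [List.take_add_one, List.getElem?_eq_getElem hk, Option.toList_some, List.map_append]
    rfl
  have hg : (l.drop k).map g = g l[k] :: (l.drop (k + 1)).map g := by
    rw [List.drop_eq_getElem_cons hk]; rfl
  rw [map_take_append_map_drop f g hk, len_append_cons, len_cons_cons, hf, hg]
  ring

end Prism

section Chains

variable (K : Type) [Field K]

noncomputable def regProj (V : Type) : (List V →₀ K) →ₗ[K] (List V →₀ K) := find K id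

noncomputable def rawBoundary (V : Type) : (List V →₀ K) →ₗ[K] (List V →₀ K) :=
  Finsupp.lsum K fun l => LinearMap.toSpanSingleton K (List V →₀ K)
    (if 2 ≤ l.length then
      ∑ q ∈ Finset.range l.length, ((-1 : K) ^ q) • Finsupp.single (l.eraseIdx q) (1 : K)
    else 0)

noncomputable def mapChain {V W : Type} (f : V → W) : (List V →₀ K) →ₗ[K] (List W →₀ K) :=
  Finsupp.lmapDomain K K (List.map f)

noncomputable def consChain {V : Type} (x : V) : (List V →₀ K) →ₗ[K] (List V →₀ K) :=
  Finsupp.lmapDomain K K (x :: ·)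

noncomputable def prism (V : Type) : (List V →₀ K) →ₗ[K] (List (V ⊕ V) →₀ K) :=
  Finsupp.lsum K fun l => LinearMap.toSpanSingleton K (List (V ⊕ V) →₀ K)
    (∑ k ∈ Finset.range l.length, ((-1 : K) ^ k) • Finsupp.single (prismPath l k) (1 : K))

variable {K}

theorem linearMap_ext_single {α N : Type} [AddCommGroup N] [Module K N]
    {φ ψ : (α →₀ K) →ₗ[K] N} (h : ∀ a, φ (Finsupp.single a 1) = ψ (Finsupp.single a 1)) :
    φ = ψ :=
  Finsupp.lhom_ext' fun a => LinearMap.ext_ring (h a)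

theorem find_single {V W : Type} (f : V → W) (l : List V) :
    find K f (Finsupp.single l 1) =
      if Reg (l.map f) then Finsupp.single (l.map f) (1 : K) else 0 := by
  rw [find, Finsupp.lsum_single, LinearMap.toSpanSingleton_apply, one_smul]

theorem regProj_single {V : Type} (l : List V) :
    regProj K V (Finsupp.single l 1) = if Reg l then Finsupp.single l (1 : K) else 0 := by
  rw [regProj, find_single, List.map_id]

theorem rawBoundary_single {V : Type} (l : List V) :
    rawBoundary K V (Finsupp.single l 1) =
      if 2 ≤ l.length then
        ∑ q ∈ Finset.range l.length, ((-1 : K) ^ q) • Finsupp.single (l.eraseIdx q) (1 : K)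
      else 0 := by
  rw [rawBoundary, Finsupp.lsum_single, LinearMap.toSpanSingleton_apply, one_smul]

theorem prism_single {V : Type} (l : List V) :
    prism K V (Finsupp.single l 1) =
      ∑ k ∈ Finset.range l.length, ((-1 : K) ^ k) • Finsupp.single (prismPath l k) (1 : K) := by
  rw [prism, Finsupp.lsum_single, LinearMap.toSpanSingleton_apply, one_smul]

theorem mapChain_single {V W : Type} (f : V → W) (l : List V) (c : K) :
    mapChain K f (Finsupp.single l c) = Finsupp.single (l.map f) c := by
  rw [mapChain, Finsupp.lmapDomain_apply, Finsupp.mapDomain_single]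

theorem consChain_single {V : Type} (x : V) (l : List V) (c : K) :
    consChain K x (Finsupp.single l c) = Finsupp.single (x :: l) c := by
  rw [consChain, Finsupp.lmapDomain_apply, Finsupp.mapDomain_single]

theorem rawBoundary_single_of_length_le_one {V : Type} {l : List V} (h : l.length ≤ 1) :
    rawBoundary K V (Finsupp.single l 1) = 0 := by
  rw [rawBoundary_single, if_neg (by omega)]

theorem dReg_eq_regProj_comp_rawBoundary (V : Type) :
    dReg K V = regProj K V ∘ₗ rawBoundary K V := by
  refine linearMap_ext_single fun l => ?_
  rw [LinearMap.comp_apply, dReg, Finsupp.lsum_single, LinearMap.toSpanSingleton_apply, one_smul,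
    rawBoundary_single]
  split
  · rw [map_sum, Fin.sum_univ_eq_sum_range (fun q => ((-1 : K) ^ q) •
      (if Reg (l.eraseIdx q) then Finsupp.single (l.eraseIdx q) (1 : K) else 0))]
    exact Finset.sum_congr rfl fun q _ => by rw [map_smul, regProj_single]
  · rw [map_zero]

theorem find_eq_regProj_comp_mapChain {V W : Type} (f : V → W) :
    find K f = regProj K W ∘ₗ mapChain K f := by
  refine linearMap_ext_single fun l => ?_
  rw [LinearMap.comp_apply, find_single, mapChain_single, regProj_single]

theorem regProj_mapChain_regProj {V W : Type} (f : V → W) (z : List V →₀ K) :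
    regProj K W (mapChain K f (regProj K V z)) = regProj K W (mapChain K f z) := by
  refine LinearMap.congr_fun (linearMap_ext_single fun l => ?_ :
    regProj K W ∘ₗ mapChain K f ∘ₗ regProj K V = regProj K W ∘ₗ mapChain K f) z
  simp only [LinearMap.comp_apply, regProj_single]
  split_ifs with h
  · rfl
  · rw [map_zero, map_zero, mapChain_single, regProj_single, if_neg (mt (Reg.of_map f) h)]

theorem mapChain_mapChain {U V W : Type} (f : U → V) (g : V → W) (z : List U →₀ K) :
    mapChain K g (mapChain K f z) = mapChain K (g ∘ f) z := by
  rw [mapChain, mapChain, mapChain, Finsupp.lmapDomain_apply, Finsupp.lmapDomain_apply,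
    Finsupp.lmapDomain_apply, ← Finsupp.mapDomain_comp, List.map_comp_map]

theorem rawBoundary_mapChain {V W : Type} (f : V → W) (z : List V →₀ K) :
    rawBoundary K W (mapChain K f z) = mapChain K f (rawBoundary K V z) := by
  refine LinearMap.congr_fun (linearMap_ext_single fun l => ?_ :
    rawBoundary K W ∘ₗ mapChain K f = mapChain K f ∘ₗ rawBoundary K V) z
  simp only [LinearMap.comp_apply, mapChain_single, rawBoundary_single, List.length_map]
  split
  · rw [map_sum]
    exact Finset.sum_congr rfl fun q _ => by
      rw [map_smul, mapChain_single, ← List.eraseIdx_map]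
  · rw [map_zero]

theorem mapChain_consChain {V W : Type} (f : V → W) (a : V) (z : List V →₀ K) :
    mapChain K f (consChain K a z) = consChain K (f a) (mapChain K f z) := by
  refine LinearMap.congr_fun (linearMap_ext_single fun l => ?_ :
    mapChain K f ∘ₗ consChain K a = consChain K (f a) ∘ₗ mapChain K f) z
  simp only [LinearMap.comp_apply, mapChain_single, consChain_single, List.map_cons]

theorem regProj_consChain_regProj {V : Type} (x : V) (z : List V →₀ K) :
    regProj K V (consChain K x (regProj K V z)) = regProj K V (consChain K x z) := by
  refine LinearMap.congr_fun (linearMap_ext_single fun l => ?_ :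
    regProj K V ∘ₗ consChain K x ∘ₗ regProj K V = regProj K V ∘ₗ consChain K x) z
  simp only [LinearMap.comp_apply, regProj_single]
  split_ifs with h
  · rfl
  · rw [map_zero, map_zero, consChain_single, regProj_single, if_neg (mt Reg.tail h)]

theorem regProj_consChain_consChain {V : Type} (x : V) (z : List V →₀ K) :
    regProj K V (consChain K x (consChain K x z)) = 0 := by
  refine LinearMap.congr_fun (linearMap_ext_single fun l => ?_ :
    regProj K V ∘ₗ consChain K x ∘ₗ consChain K x = 0) z
  simp only [LinearMap.comp_apply, consChain_single, regProj_single, LinearMap.zero_apply,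
    if_neg (not_reg_cons_cons_self x l)]

/-- The correction term: `[x]` is a face of the 1-path `x :: t`, but the 0-path `t` has no
faces. -/
theorem rawBoundary_cons {V : Type} (x : V) {t : List V} (ht : t ≠ []) :
    rawBoundary K V (Finsupp.single (x :: t) 1) =
      Finsupp.single t 1 - consChain K x (rawBoundary K V (Finsupp.single t 1))
        - if t.length = 1 then Finsupp.single [x] (1 : K) else 0 := by
  have hlen : 1 ≤ t.length := List.length_pos_iff.2 ht
  rw [rawBoundary_single, if_pos (by simp only [List.length_cons]; omega)]
  simp only [List.length_cons]
  rw [Finset.sum_range_succ']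
  simp only [List.eraseIdx_cons_succ, List.eraseIdx_cons_zero, pow_succ, mul_neg_one,
    neg_smul, pow_zero, one_smul, Finset.sum_neg_distrib]
  rcases eq_or_lt_of_le hlen with h1 | h2
  · obtain ⟨b, rfl⟩ := List.length_eq_one_iff.1 h1.symm
    rw [rawBoundary_single_of_length_le_one le_rfl]
    simp only [List.length_cons, List.length_nil, zero_add, Finset.range_one, Finset.sum_singleton,
      List.eraseIdx_zero, List.tail_cons, pow_zero, one_smul, map_zero, sub_zero, ↓reduceIte]
    abel
  · rw [rawBoundary_single, if_pos (by omega), if_neg (by omega), map_sum]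
    simp only [map_smul, consChain_single]
    abel

theorem prism_cons {V : Type} (a : V) (s : List V) :
    prism K V (Finsupp.single (a :: s) 1) =
      Finsupp.single (Sum.inl a :: Sum.inr a :: s.map Sum.inr) (1 : K)
        - consChain K (Sum.inl a) (prism K V (Finsupp.single s 1)) := by
  rw [prism_single, prism_single, List.length_cons, Finset.sum_range_succ', map_sum]
  simp only [prismPath_cons_succ, prismPath_cons_zero, pow_succ, mul_neg_one, neg_smul,
    pow_zero, one_smul, Finset.sum_neg_distrib, map_smul, consChain_single]
  abel

theorem prism_consChain {V : Type} (a : V) (y : List V →₀ K) :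
    prism K V (consChain K a y) =
      consChain K (Sum.inl a) (consChain K (Sum.inr a) (mapChain K Sum.inr y))
        - consChain K (Sum.inl a) (prism K V y) := by
  refine LinearMap.congr_fun (linearMap_ext_single fun s => ?_ :
    prism K V ∘ₗ consChain K a = consChain K (Sum.inl a) ∘ₗ consChain K (Sum.inr a) ∘ₗ
      mapChain K Sum.inr - consChain K (Sum.inl a) ∘ₗ prism K V) y
  simp only [LinearMap.sub_apply, LinearMap.comp_apply, consChain_single, mapChain_single]
  rw [prism_cons]

theorem rawBoundary_consChain_prism {V : Type} (x : V ⊕ V) {l : List V} (hl : l ≠ []) :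
    rawBoundary K (V ⊕ V) (consChain K x (prism K V (Finsupp.single l 1))) =
      prism K V (Finsupp.single l 1)
        - consChain K x (rawBoundary K (V ⊕ V) (prism K V (Finsupp.single l 1))) := by
  have hlen : 1 ≤ l.length := List.length_pos_iff.2 hl
  rw [prism_single, map_sum, map_sum, map_sum, map_sum, ← Finset.sum_sub_distrib]
  refine Finset.sum_congr rfl fun k hk => ?_
  have hk' : k < l.length := Finset.mem_range.1 hk
  have hne : prismPath l k ≠ [] :=
    List.ne_nil_of_length_pos (by rw [length_prismPath hk']; omega)
  rw [map_smul, map_smul, map_smul, map_smul, ← smul_sub, consChain_single,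
    rawBoundary_cons x hne, if_neg (by rw [length_prismPath hk']; omega), sub_zero]

theorem rawBoundary_prism {V : Type} (l : List V) :
    rawBoundary K (V ⊕ V) (prism K V (Finsupp.single l 1)) =
      Finsupp.single (l.map Sum.inr) 1 - Finsupp.single (l.map Sum.inl) 1
        - prism K V (rawBoundary K V (Finsupp.single l 1)) := by
  induction l with
  | nil => simp [prism_single, rawBoundary_single]
  | cons a m ih =>
    rcases eq_or_ne m [] with rfl | hm
    · rw [rawBoundary_single_of_length_le_one le_rfl, map_zero, sub_zero, prism_single]
      simp [prismPath, rawBoundary_single, Finset.sum_range_succ, sub_eq_add_neg]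
    · have hcorr : consChain K (Sum.inl a) (mapChain K Sum.inr
            (if m.length = 1 then Finsupp.single [a] 1 else 0)) =
          prism K V (if m.length = 1 then Finsupp.single [a] 1 else 0) := by
        split
        · rw [mapChain_single, consChain_single, prism_single]
          simp [prismPath]
        · rw [map_zero, map_zero, map_zero]
      have hfront : rawBoundary K (V ⊕ V)
            (Finsupp.single (Sum.inl a :: Sum.inr a :: m.map Sum.inr) 1) =
          Finsupp.single ((a :: m).map Sum.inr) 1 - consChain K (Sum.inl a)
            (mapChain K Sum.inr (rawBoundary K V (Finsupp.single (a :: m) 1))) := by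
        rw [rawBoundary_cons _ (List.cons_ne_nil _ _), if_neg (by simp [hm]), sub_zero,
          ← List.map_cons, ← mapChain_single, rawBoundary_mapChain]
      rw [prism_cons, map_sub, hfront, rawBoundary_consChain_prism _ hm, ih,
        rawBoundary_cons a hm]
      simp only [map_sub, mapChain_single, mapChain_consChain, prism_consChain, consChain_single,
        List.map_cons, hcorr]
      abel

theorem regProj_rawBoundary_single_of_not_reg {V : Type} :
    ∀ {l : List V}, ¬ Reg l → regProj K V (rawBoundary K V (Finsupp.single l 1)) = 0
  | [], h => absurd List.isChain_nil h
  | [x], h => absurd (List.isChain_singleton x) h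
  | x :: b :: t, h => by
    rw [rawBoundary_cons x (List.cons_ne_nil b t), map_sub, map_sub]
    by_cases hrt : Reg (b :: t)
    · obtain rfl : x = b := by
        by_contra hne
        exact h (List.isChain_cons.2 ⟨by simpa using hne, hrt⟩)
      rcases t with _ | ⟨c, t⟩
      · rw [rawBoundary_single_of_length_le_one le_rfl, map_zero, map_zero,
          if_pos List.length_singleton, sub_zero, sub_self]
      · rw [rawBoundary_cons x (List.cons_ne_nil c t), map_sub, map_sub, map_sub, map_sub,
          regProj_consChain_consChain, if_neg (show (x :: c :: t).length ≠ 1 by simp)]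
        split_ifs <;> simp [regProj_single, consChain_single, hrt, not_reg_cons_cons_self]
    · have hlen : (b :: t).length ≠ 1 := by
        rintro hc
        obtain ⟨u, hu⟩ := List.length_eq_one_iff.1 hc
        exact hrt (hu ▸ List.isChain_singleton u)
      rw [← regProj_consChain_regProj, regProj_rawBoundary_single_of_not_reg hrt, map_zero,
        map_zero, if_neg hlen, map_zero, regProj_single, if_neg hrt, sub_zero, sub_zero]

theorem regProj_rawBoundary_regProj {V : Type} (z : List V →₀ K) :
    regProj K V (rawBoundary K V (regProj K V z)) = regProj K V (rawBoundary K V z) := by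
  refine LinearMap.congr_fun (linearMap_ext_single fun l => ?_ :
    regProj K V ∘ₗ rawBoundary K V ∘ₗ regProj K V = regProj K V ∘ₗ rawBoundary K V) z
  simp only [LinearMap.comp_apply, regProj_single]
  split_ifs with h
  · rfl
  · rw [map_zero, map_zero, regProj_rawBoundary_single_of_not_reg h]

theorem regProj_mapChain_prism_regProj {V W : Type} (F : V ⊕ V → W) (z : List V →₀ K) :
    regProj K W (mapChain K F (prism K V (regProj K V z))) =
      regProj K W (mapChain K F (prism K V z)) := by
  refine LinearMap.congr_fun (linearMap_ext_single fun l => ?_ :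
    regProj K W ∘ₗ mapChain K F ∘ₗ prism K V ∘ₗ regProj K V =
      regProj K W ∘ₗ mapChain K F ∘ₗ prism K V) z
  simp only [LinearMap.comp_apply, regProj_single]
  split_ifs with h
  · rfl
  · rw [map_zero, map_zero, map_zero, prism_single, map_sum, map_sum]
    refine (Finset.sum_eq_zero fun k hk => ?_).symm
    rw [map_smul, map_smul, mapChain_single, regProj_single,
      if_neg (mt (Reg.of_map_prismPath F (Finset.mem_range.1 hk)) h), smul_zero]

theorem dReg_find {V W : Type} (f : V → W) (z : List V →₀ K) :
    dReg K W (find K f z) = find K f (dReg K V z) := by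
  simp only [dReg_eq_regProj_comp_rawBoundary, find_eq_regProj_comp_mapChain,
    LinearMap.comp_apply]
  rw [regProj_rawBoundary_regProj, rawBoundary_mapChain, regProj_mapChain_regProj]

theorem find_find {U V W : Type} (f : U → V) (g : V → W) (z : List U →₀ K) :
    find K g (find K f z) = find K (g ∘ f) z := by
  simp only [find_eq_regProj_comp_mapChain, LinearMap.comp_apply]
  rw [regProj_mapChain_regProj, mapChain_mapChain]

theorem dReg_find_prism {V W : Type} (F : V ⊕ V → W) (z : List V →₀ K) :
    dReg K W (find K F (prism K V z)) =
      find K (F ∘ Sum.inr) z - find K (F ∘ Sum.inl) z - find K F (prism K V (dReg K V z)) := by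
  have hprism : rawBoundary K (V ⊕ V) (prism K V z) =
      mapChain K Sum.inr z - mapChain K Sum.inl z - prism K V (rawBoundary K V z) := by
    refine LinearMap.congr_fun (linearMap_ext_single fun l => ?_ :
      rawBoundary K (V ⊕ V) ∘ₗ prism K V =
        mapChain K Sum.inr - mapChain K Sum.inl - prism K V ∘ₗ rawBoundary K V) z
    simp only [LinearMap.comp_apply, LinearMap.sub_apply, mapChain_single]
    exact rawBoundary_prism l
  simp only [dReg_eq_regProj_comp_rawBoundary, find_eq_regProj_comp_mapChain,
    LinearMap.comp_apply]
  rw [regProj_rawBoundary_regProj, rawBoundary_mapChain, hprism, map_sub, map_sub, map_sub,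
    map_sub, mapChain_mapChain, mapChain_mapChain, regProj_mapChain_prism_regProj]

end Chains

section Distortion

theorem sSup_insert_zero_nonneg (s : Set ℝ) : 0 ≤ sSup (insert 0 s) := by
  by_cases hb : BddAbove (insert 0 s)
  · exact le_csSup hb (Set.mem_insert 0 s)
  · rw [Real.sSup_of_not_bddAbove hb]

theorem le_sSup_insert_zero {s : Set ℝ} (hs : s.Finite) {d : ℝ} (hd : d ∈ s) :
    d ≤ sSup (insert 0 s) :=
  le_csSup (hs.insert 0).bddAbove (Set.mem_insert_of_mem 0 hd)

theorem le_sSup_insert_zero_of_subset_image {s : Set ℝ} {N : ℕ} {F : ℕ → ℝ}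
    (hs : s ⊆ F '' Set.Iic N) {d : ℝ} (hd : d ∈ s) : d ≤ sSup (insert 0 s) :=
  le_sSup_insert_zero (((Set.finite_Iic N).image F).subset hs) hd

variable {V W : Type}

theorem disN_nonneg (P : Set (List V)) (wP : V → V → ℝ) (wS : W → W → ℝ) (φ : V → W) (n : ℕ) :
    0 ≤ disN P wP wS φ n :=
  sSup_insert_zero_nonneg _

theorem disN_zero (P : Set (List V)) (wP : V → V → ℝ) (wS : W → W → ℝ) (φ : V → W) :
    disN P wP wS φ 0 = 0 := by
  refine le_antisymm (csSup_le (Set.insert_nonempty _ _) ?_) (disN_nonneg P wP wS φ 0)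
  rintro _ (rfl | ⟨e, -, he, -, rfl⟩)
  · exact le_rfl
  · rw [len_of_length_eq_one _ he, len_of_length_eq_one _ (by rwa [List.length_map]),
      sub_zero, abs_zero]

theorem len_map_le_add_disN [Finite V] {P : Set (List V)} {wP : V → V → ℝ} {wS : W → W → ℝ}
    {φ : V → W} {n : ℕ} {e : List V} (he : e ∈ P)
    (hlen : e.length = n + 1) (hreg : Reg (e.map φ)) :
    len wS (e.map φ) ≤ len wP e + disN P wP wS φ n := by
  have hfin : {d : ℝ | ∃ e ∈ P, e.length = n + 1 ∧ Reg (e.map φ) ∧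
      d = |len wS (e.map φ) - len wP e|}.Finite :=
    ((List.finite_length_eq V (n + 1)).image fun e => |len wS (e.map φ) - len wP e|).subset
      (by rintro _ ⟨e, -, he, -, rfl⟩; exact ⟨e, he, rfl⟩)
  have : _ ≤ disN P wP wS φ n := le_sSup_insert_zero hfin ⟨e, he, hlen, hreg, rfl⟩
  linarith [le_abs_self (len wS (e.map φ) - len wP e)]

noncomputable def maxDisN (P : Set (List V)) (wP : V → V → ℝ) (wS : W → W → ℝ) (φ : V → W)
    (p : ℕ) : ℝ :=
  sSup (insert 0 {d : ℝ | ∃ i : ℕ, 1 ≤ i ∧ i ≤ p + 1 ∧ d = disN P wP wS φ i})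

theorem disN_le_of_maxDisN_le {P : Set (List V)} {wP : V → V → ℝ} {wS : W → W → ℝ}
    {φ : V → W} {p i : ℕ} {η : ℝ} (h : maxDisN P wP wS φ p ≤ η)
    (hi : i ≤ p + 1) : disN P wP wS φ i ≤ η := by
  rcases Nat.eq_zero_or_pos i with rfl | hi0
  · exact (disN_zero P wP wS φ).trans_le ((sSup_insert_zero_nonneg _).trans h)
  · have hs : {d : ℝ | ∃ i : ℕ, 1 ≤ i ∧ i ≤ p + 1 ∧ d = disN P wP wS φ i} ⊆
        (disN P wP wS φ ·) '' Set.Iic (p + 1) := by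
      rintro _ ⟨j, -, hj, rfl⟩
      exact ⟨j, hj, rfl⟩
    exact (le_sSup_insert_zero_of_subset_image hs ⟨i, hi0, hi, rfl⟩).trans h

theorem codP_nonneg (S : Set (List W)) (wS : W → W → ℝ) (φ ψ : V → W) : 0 ≤ codP S wS φ ψ :=
  sSup_insert_zero_nonneg _

theorem codP_comm (S : Set (List W)) (wS : W → W → ℝ) (φ ψ : V → W) :
    codP S wS φ ψ = codP S wS ψ φ := by
  rw [codP, codP, Set.union_comm]

theorem le_codP [Finite V] {S : Set (List W)} {wS : W → W → ℝ} {φ ψ : V → W} {x : V}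
    (h : [φ x, ψ x] ∈ S) : wS (φ x) (ψ x) ≤ codP S wS φ ψ := by
  refine le_sSup_insert_zero (Set.Finite.union ?_ ?_) (Or.inl ⟨x, h, rfl⟩)
  · exact (Set.finite_range fun x => wS (φ x) (ψ x)).subset fun _ ⟨x, _, hd⟩ => ⟨x, hd.symm⟩
  · exact (Set.finite_range fun x => wS (ψ x) (φ x)).subset fun _ ⟨x, _, hd⟩ => ⟨x, hd.symm⟩

noncomputable def homotopyCost (P : Set (List V)) (w : V → V → ℝ) (p m : ℕ)
    (f : ℕ → V → V) : ℝ :=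
  sSup (insert 0 {d : ℝ | ∃ k : ℕ, 1 ≤ k ∧ k ≤ m ∧
    d = sSup (insert 0 {d' : ℝ | ∃ l : ℕ, l ≤ p ∧
          d' = disN P w w (f (k - 1)) l + disN P w w (f k) (p - l)}) +
        codP P w (f (k - 1)) (f k)})

theorem disN_add_disN_add_codP_le {P : Set (List V)} {w : V → V → ℝ} {p m k j : ℕ}
    {f : ℕ → V → V} {η : ℝ} (h : homotopyCost P w p m f ≤ η) (hk : 1 ≤ k) (hkm : k ≤ m)
    (hj : j ≤ p) :
    disN P w w (f (k - 1)) j + disN P w w (f k) (p - j) + codP P w (f (k - 1)) (f k) ≤ η := by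
  have hinner : disN P w w (f (k - 1)) j + disN P w w (f k) (p - j) ≤
      sSup (insert 0 {d' : ℝ | ∃ l : ℕ, l ≤ p ∧
        d' = disN P w w (f (k - 1)) l + disN P w w (f k) (p - l)}) :=
    le_sSup_insert_zero_of_subset_image (by rintro _ ⟨l, hl, rfl⟩; exact ⟨l, hl, rfl⟩)
      ⟨j, hj, rfl⟩
  refine le_trans (add_le_add_left hinner _) (le_trans ?_ h)
  exact le_sSup_insert_zero_of_subset_image (by rintro _ ⟨k, -, hk, rfl⟩; exact ⟨k, hk, rfl⟩)
    ⟨k, hk, hkm, rfl⟩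

end Distortion

section Sublevel

variable {K : Type} [Field K]

theorem map_mem_of_mem_supported {α N : Type} [AddCommGroup N] [Module K N] {s : Set α}
    (T : (α →₀ K) →ₗ[K] N) {M : Submodule K N} (h : ∀ a ∈ s, T (Finsupp.single a 1) ∈ M)
    {z : α →₀ K} (hz : z ∈ Finsupp.supported K K s) : T z ∈ M := by
  rw [Finsupp.supported_eq_span_single] at hz
  exact (Submodule.span_le (p := M.comap T)).2 (Set.image_subset_iff.2 h) hz

theorem find_id_of_mem_Asub {V : Type} {P : Set (List V)} {n : ℕ} {z : List V →₀ K}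
    (hz : z ∈ Asub K P n) : find K id z = z := by
  have := map_mem_of_mem_supported (find K id - LinearMap.id) (M := ⊥)
    (fun l hl => by simp [find_single, hl.2.2]) hz
  rwa [Submodule.mem_bot, LinearMap.sub_apply, sub_eq_zero] at this

theorem subPC_mono {V : Type} (P : Set (List V)) (w : V → V → ℝ) {δ δ' : ℝ} (h : δ ≤ δ') :
    subPC P w δ ⊆ subPC P w δ' :=
  fun _ ⟨hP, hl⟩ => ⟨hP, hl.imp_right fun hle => hle.trans h⟩

theorem Asub_mono {V : Type} {P Q : Set (List V)} (h : P ⊆ Q) (n : ℕ) :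
    Asub K P n ≤ Asub K Q n :=
  Finsupp.supported_mono fun _ hl => ⟨h hl.1, hl.2⟩

theorem OmegaSub_mono {V : Type} {P Q : Set (List V)} (h : P ⊆ Q) (n : ℕ) :
    OmegaSub K P n ≤ OmegaSub K Q n :=
  inf_le_inf (Asub_mono h n) (Submodule.comap_mono (Asub_mono h _))

theorem Zsub_mono {V : Type} {P Q : Set (List V)} (h : P ⊆ Q) (n : ℕ) :
    Zsub K P n ≤ Zsub K Q n :=
  inf_le_inf_right _ (OmegaSub_mono h n)

theorem Bsub_mono {V : Type} {P Q : Set (List V)} (h : P ⊆ Q) (n : ℕ) :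
    Bsub K P n ≤ Bsub K Q n :=
  Submodule.map_mono (OmegaSub_mono h _)

variable {V W : Type} {P : Set (List V)} {S : Set (List W)}
  {wP : V → V → ℝ} {wS : W → W → ℝ} {f : V → W} {n : ℕ} {δ η : ℝ}

theorem find_single_mem_Asub {l : List V} (hl : l.length = n + 1)
    (h : Reg (l.map f) → l.map f ∈ S) : find K f (Finsupp.single l 1) ∈ Asub K S n := by
  rw [find_single]
  split_ifs with hr
  · exact Finsupp.single_mem_supported K 1 ⟨h hr, by rw [List.length_map, hl], hr⟩
  · exact zero_mem _

theorem find_mem_Asub [Finite V] (hf : IsWeakMor P S f) (hdis : disN P wP wS f n ≤ η)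
    {z : List V →₀ K} (hz : z ∈ Asub K (subPC P wP δ) n) :
    find K f z ∈ Asub K (subPC S wS (δ + η)) n := by
  refine map_mem_of_mem_supported _ ?_ hz
  rintro l ⟨⟨hP, hl⟩, hlen, -⟩
  refine find_single_mem_Asub hlen fun hr => ⟨(hf l hP).resolve_right (not_not.2 hr), ?_⟩
  refine hl.imp (fun h => by rwa [List.length_map]) fun h => ?_
  linarith [len_map_le_add_disN (wP := wP) (wS := wS) hP hlen hr]

theorem find_mem_OmegaSub [Finite V] (hf : IsWeakMor P S f) (hdis : disN P wP wS f n ≤ η)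
    (hdis' : disN P wP wS f (n - 1) ≤ η) {z : List V →₀ K}
    (hz : z ∈ OmegaSub K (subPC P wP δ) n) : find K f z ∈ OmegaSub K (subPC S wS (δ + η)) n :=
  ⟨find_mem_Asub hf hdis hz.1, show dReg K W (find K f z) ∈ _ by
    rw [dReg_find]; exact find_mem_Asub hf hdis' hz.2⟩

theorem find_mem_Zsub [Finite V] (hf : IsWeakMor P S f) (hdis : disN P wP wS f n ≤ η)
    {z : List V →₀ K} (hz : z ∈ Zsub K (subPC P wP δ) n) :
    find K f z ∈ Zsub K (subPC S wS (δ + η)) n := by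
  have hdz : dReg K V z = 0 := hz.2
  have hdfz : dReg K W (find K f z) = 0 := by rw [dReg_find, hdz, map_zero]
  have hdfz' : dReg K W (find K f z) ∈ Asub K (subPC S wS (δ + η)) (n - 1) := hdfz ▸ zero_mem _
  exact ⟨⟨find_mem_Asub hf hdis hz.1.1, hdfz'⟩, hdfz⟩

theorem find_mem_Bsub [Finite V] (hf : IsWeakMor P S f) (hdis : disN P wP wS f (n + 1) ≤ η)
    (hdis' : disN P wP wS f n ≤ η) {z : List V →₀ K} (hz : z ∈ Bsub K (subPC P wP δ) n) :
    find K f z ∈ Bsub K (subPC S wS (δ + η)) n := by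
  obtain ⟨ω, hω, rfl⟩ := hz
  exact ⟨find K f ω, find_mem_OmegaSub hf hdis hdis' hω, dReg_find f ω⟩

end Sublevel

section Homotopy

theorem IsWeakMor.comp_inl {V W : Type} {P : Set (List V)} {S : Set (List W)}
    {F : V ⊕ V → W} (hF : IsWeakMor (cylSet P) S F) : IsWeakMor P S (F ∘ Sum.inl) :=
  fun l hl => by rw [← List.map_map]; exact hF _ (Or.inl ⟨l, hl, rfl⟩)

theorem IsWeakMor.comp_inr {V W : Type} {P : Set (List V)} {S : Set (List W)}
    {F : V ⊕ V → W} (hF : IsWeakMor (cylSet P) S F) : IsWeakMor P S (F ∘ Sum.inr) :=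
  fun l hl => by rw [← List.map_map]; exact hF _ (Or.inr (Or.inl ⟨l, hl, rfl⟩))

variable {K : Type} [Field K] {V W : Type} [Finite V] (P : PathComplex V) (S : PathComplex W)
  {wP : V → V → ℝ} {wS : W → W → ℝ} {F : V ⊕ V → W} {f g : V → W} {p : ℕ} {δ η : ℝ}

/-- The image of the `k`-th prism path is `f(i₀ … i_k)`, then the edge `f(i_k) g(i_k)`, then
`g(i_k … i_p)`; hence the three terms of the length bound. -/
theorem map_prismPath_mem_subPC (hF : IsWeakMor (cylSet P.carrier) S.carrier F)
    (hFl : ∀ v, F (Sum.inl v) = f v) (hFr : ∀ v, F (Sum.inr v) = g v) (hδ : 0 ≤ δ)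
    {l : List V} (hl : l ∈ subPC P.carrier wP δ) (hlen : l.length = p + 1) {k : ℕ} (hk : k ≤ p)
    (hd : disN P.carrier wP wS f k + disN P.carrier wP wS g (p - k) + codP S.carrier wS f g ≤ η)
    (hreg : Reg ((prismPath l k).map F)) :
    (prismPath l k).map F ∈ subPC S.carrier wS (δ + η) := by
  obtain ⟨hlP, hlδ⟩ := hl
  have hk' : k < l.length := by omega
  have hmem : (prismPath l k).map F ∈ S.carrier :=
    (hF _ (Or.inr (Or.inr ⟨l, hlP, k, hk', rfl⟩))).resolve_right (not_not.2 hreg)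
  refine ⟨hmem, Or.inr ?_⟩
  rw [map_prismPath hFl hFr] at hreg hmem ⊢
  have hf := len_map_le_add_disN (wP := wP) (wS := wS) (n := k) (P.take_mem hlP k.succ_pos)
    (by rw [List.length_take]; omega) (hreg.prefix (List.prefix_append _ _))
  have hg := len_map_le_add_disN (wP := wP) (wS := wS) (n := p - k) (P.drop_mem hlP hk')
    (by rw [List.length_drop]; omega) (hreg.suffix (List.suffix_append _ _))
  have hedge : [f l[k], g l[k]] ∈ S.carrier := by
    refine S.mem_of_infix hmem ⟨(l.take k).map f, (l.drop (k + 1)).map g, ?_⟩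
      (List.cons_ne_nil _ _)
    rw [map_take_append_map_drop f g hk']
    simp
  have hlδ' : len wP l ≤ δ := hlδ.elim (fun h => (len_of_length_eq_one wP h).trans_le hδ) id
  rw [len_map_take_append_map_drop wS f g hk', ← len_take_add_len_drop wP k l hk'] at *
  linarith [le_codP (wS := wS) hedge]

theorem find_prism_mem_Asub (hF : IsWeakMor (cylSet P.carrier) S.carrier F)
    (hFl : ∀ v, F (Sum.inl v) = f v) (hFr : ∀ v, F (Sum.inr v) = g v) (hδ : 0 ≤ δ)
    (hd : ∀ k ≤ p,
      disN P.carrier wP wS f k + disN P.carrier wP wS g (p - k) + codP S.carrier wS f g ≤ η)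
    {z : List V →₀ K} (hz : z ∈ Asub K (subPC P.carrier wP δ) p) :
    find K F (prism K V z) ∈ Asub K (subPC S.carrier wS (δ + η)) (p + 1) := by
  refine map_mem_of_mem_supported (find K F ∘ₗ prism K V) ?_ hz
  rintro l ⟨hl, hlen, -⟩
  rw [LinearMap.comp_apply, prism_single, map_sum]
  refine Submodule.sum_mem _ fun k hk => ?_
  have hkp : k ≤ p := by rw [Finset.mem_range] at hk; omega
  rw [map_smul]
  refine Submodule.smul_mem _ _ (find_single_mem_Asub ?_ ?_)
  · rw [length_prismPath (by omega), hlen]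
  · exact map_prismPath_mem_subPC P S hF hFl hFr hδ hl hlen hkp (hd k hkp)

theorem find_sub_find_mem_Bsub_of_cylinder (hF : IsWeakMor (cylSet P.carrier) S.carrier F)
    (hFl : ∀ v, F (Sum.inl v) = f v) (hFr : ∀ v, F (Sum.inr v) = g v) (hδ : 0 ≤ δ)
    (hd : ∀ k ≤ p,
      disN P.carrier wP wS f k + disN P.carrier wP wS g (p - k) + codP S.carrier wS f g ≤ η)
    {z : List V →₀ K} (hz : z ∈ Zsub K (subPC P.carrier wP δ) p) :
    find K g z - find K f z ∈ Bsub K (subPC S.carrier wS (δ + η)) p := by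
  have hFl' : F ∘ Sum.inl = f := funext hFl
  have hFr' : F ∘ Sum.inr = g := funext hFr
  have hdz : dReg K V z = 0 := hz.2
  have hboundary : dReg K W (find K F (prism K V z)) = find K g z - find K f z := by
    rw [dReg_find_prism, hdz, map_zero, map_zero, sub_zero, hFl', hFr']
  have hfp : disN P.carrier wP wS f p ≤ η := by
    have := hd p le_rfl
    rw [Nat.sub_self] at this
    linarith [disN_nonneg P.carrier wP wS g 0, codP_nonneg S.carrier wS f g]
  have hgp : disN P.carrier wP wS g p ≤ η := by
    have := hd 0 (Nat.zero_le p)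
    rw [Nat.sub_zero] at this
    linarith [disN_nonneg P.carrier wP wS f 0, codP_nonneg S.carrier wS f g]
  refine ⟨_, ⟨find_prism_mem_Asub P S hF hFl hFr hδ hd hz.1.1, ?_⟩, hboundary⟩
  show dReg K W (find K F (prism K V z)) ∈ Asub K (subPC S.carrier wS (δ + η)) p
  rw [hboundary]
  exact sub_mem (find_mem_Asub (hFr' ▸ hF.comp_inr) hgp hz.1.1)
    (find_mem_Asub (hFl' ▸ hF.comp_inl) hfp hz.1.1)

theorem find_sub_find_mem_Bsub_of_WOneStep (h : WOneStep P.carrier S.carrier f g) (hδ : 0 ≤ δ)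
    (hd : ∀ k ≤ p,
      disN P.carrier wP wS f k + disN P.carrier wP wS g (p - k) + codP S.carrier wS f g ≤ η)
    {z : List V →₀ K} (hz : z ∈ Zsub K (subPC P.carrier wP δ) p) :
    find K g z - find K f z ∈ Bsub K (subPC S.carrier wS (δ + η)) p := by
  obtain ⟨F, hF, ⟨hFl, hFr⟩ | ⟨hFl, hFr⟩⟩ := h
  · exact find_sub_find_mem_Bsub_of_cylinder P S hF hFl hFr hδ hd hz
  · rw [← neg_sub]
    refine neg_mem (find_sub_find_mem_Bsub_of_cylinder P S hF hFl hFr hδ (fun k hk => ?_) hz)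
    have := hd (p - k) (Nat.sub_le p k)
    rw [Nat.sub_sub_self hk, codP_comm] at this
    linarith

end Homotopy

theorem find_sub_mem_Bsub_of_homotopyChain {K : Type} [Field K] {V : Type} [Finite V]
    (P : PathComplex V) {w : V → V → ℝ} {p m : ℕ} {δ η : ℝ} {f : ℕ → V → V} (hfm : f m = id)
    (hstep : ∀ k, 1 ≤ k → k ≤ m → WOneStep P.carrier P.carrier (f (k - 1)) (f k))
    (hcost : homotopyCost P.carrier w p m f ≤ η) (hδ : 0 ≤ δ) {z : List V →₀ K}
    (hz : z ∈ Zsub K (subPC P.carrier w δ) p) :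
    find K (f 0) z - z ∈ Bsub K (subPC P.carrier w (δ + η)) p := by
  have hsteps : ∀ i ∈ Finset.range m,
      find K (f (i + 1)) z - find K (f i) z ∈ Bsub K (subPC P.carrier w (δ + η)) p := by
    intro i hi
    have him : i + 1 ≤ m := Finset.mem_range.1 hi
    exact find_sub_find_mem_Bsub_of_WOneStep P P (hstep (i + 1) (Nat.le_add_left 1 i) him) hδ
      (fun j hj => disN_add_disN_add_codP_le hcost (Nat.le_add_left 1 i) him hj) hz
  have htelescope := Submodule.sum_mem _ hsteps
  rw [Finset.sum_range_sub (fun i => find K (f i) z), hfm, find_id_of_mem_Asub hz.1.1]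
    at htelescope
  rw [← neg_sub]
  exact neg_mem htelescope

end PH

theorem statement18_general (K : Type) [Field K] (V W : Type) [Fintype V] [Fintype W]
    (wP : V → V → ℝ) (wS : W → W → ℝ)
    (p : ℕ)
    (Pbar : PH.PathComplex V) (Sbar : PH.PathComplex W)
    (φ : V → W) (ψ : W → V)
    (hφ : PH.IsWeakMor Pbar.carrier Sbar.carrier φ)
    (hψ : PH.IsWeakMor Sbar.carrier Pbar.carrier ψ)
    (m : ℕ) (f : ℕ → V → V) (g : ℕ → W → W)
    (hf0 : f 0 = ψ ∘ φ) (hfm : f m = id)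
    (hfstep : ∀ k : ℕ, 1 ≤ k → k ≤ m →
        PH.WOneStep Pbar.carrier Pbar.carrier (f (k - 1)) (f k))
    (hg0 : g 0 = φ ∘ ψ) (hgm : g m = id)
    (hgstep : ∀ k : ℕ, 1 ≤ k → k ≤ m →
        PH.WOneStep Sbar.carrier Sbar.carrier (g (k - 1)) (g k))
    (η : ℝ)
    (hη : η = max
      (sSup (insert 0 {d : ℝ | ∃ i : ℕ, 1 ≤ i ∧ i ≤ p + 1 ∧
          d = PH.disN Pbar.carrier wP wS φ i}))
      (max
      (sSup (insert 0 {d : ℝ | ∃ i : ℕ, 1 ≤ i ∧ i ≤ p + 1 ∧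
          d = PH.disN Sbar.carrier wS wP ψ i}))
      (max
      ((1 / 2) * sSup (insert 0 {d : ℝ | ∃ k : ℕ, 1 ≤ k ∧ k ≤ m ∧
          d = sSup (insert 0 {d' : ℝ | ∃ l : ℕ, l ≤ p ∧
                d' = PH.disN Pbar.carrier wP wP (f (k - 1)) l +
                     PH.disN Pbar.carrier wP wP (f k) (p - l)}) +
              PH.codP Pbar.carrier wP (f (k - 1)) (f k)}))
      ((1 / 2) * sSup (insert 0 {d : ℝ | ∃ k : ℕ, 1 ≤ k ∧ k ≤ m ∧
          d = sSup (insert 0 {d' : ℝ | ∃ l : ℕ, l ≤ p ∧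
                d' = PH.disN Sbar.carrier wS wS (g (k - 1)) l +
                     PH.disN Sbar.carrier wS wS (g k) (p - l)}) +
              PH.codP Sbar.carrier wS (g (k - 1)) (g k)}))))) :
    -- the p-th persistence modules of P̄ and S̄ are η-interleaved via φ and ψ
    (∀ δ : ℝ, 0 ≤ δ →
      (∀ z : List V →₀ K, z ∈ PH.Zsub K (PH.subPC Pbar.carrier wP δ) p →
          PH.find K φ z ∈ PH.Zsub K (PH.subPC Sbar.carrier wS (δ + η)) p) ∧
      (∀ z : List V →₀ K, z ∈ PH.Bsub K (PH.subPC Pbar.carrier wP δ) p →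
          PH.find K φ z ∈ PH.Bsub K (PH.subPC Sbar.carrier wS (δ + η)) p) ∧
      (∀ z : List W →₀ K, z ∈ PH.Zsub K (PH.subPC Sbar.carrier wS δ) p →
          PH.find K ψ z ∈ PH.Zsub K (PH.subPC Pbar.carrier wP (δ + η)) p) ∧
      (∀ z : List W →₀ K, z ∈ PH.Bsub K (PH.subPC Sbar.carrier wS δ) p →
          PH.find K ψ z ∈ PH.Bsub K (PH.subPC Pbar.carrier wP (δ + η)) p)) ∧
    -- the structure maps are induced by the inclusions
    (∀ δ δ' : ℝ, 0 ≤ δ → δ ≤ δ' →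
      PH.Zsub K (PH.subPC Pbar.carrier wP δ) p ≤
        PH.Zsub K (PH.subPC Pbar.carrier wP δ') p ∧
      PH.Bsub K (PH.subPC Pbar.carrier wP δ) p ≤
        PH.Bsub K (PH.subPC Pbar.carrier wP δ') p ∧
      PH.Zsub K (PH.subPC Sbar.carrier wS δ) p ≤
        PH.Zsub K (PH.subPC Sbar.carrier wS δ') p ∧
      PH.Bsub K (PH.subPC Sbar.carrier wS δ) p ≤
        PH.Bsub K (PH.subPC Sbar.carrier wS δ') p) ∧
    -- the composites equal the structure maps δ ≤ δ+2η on homology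
    (∀ δ : ℝ, 0 ≤ δ →
      (∀ z : List V →₀ K, z ∈ PH.Zsub K (PH.subPC Pbar.carrier wP δ) p →
          PH.find K ψ (PH.find K φ z) - z ∈
            PH.Bsub K (PH.subPC Pbar.carrier wP (δ + 2 * η)) p) ∧
      (∀ z : List W →₀ K, z ∈ PH.Zsub K (PH.subPC Sbar.carrier wS δ) p →
          PH.find K φ (PH.find K ψ z) - z ∈
            PH.Bsub K (PH.subPC Sbar.carrier wS (δ + 2 * η)) p)) := by
  have hφη : PH.maxDisN Pbar.carrier wP wS φ p ≤ η := hη ▸ le_max_left _ _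
  have hψη : PH.maxDisN Sbar.carrier wS wP ψ p ≤ η :=
    hη ▸ (le_max_left _ _).trans (le_max_right _ _)
  have hfη : PH.homotopyCost Pbar.carrier wP p m f ≤ 2 * η := by
    have : 1 / 2 * PH.homotopyCost Pbar.carrier wP p m f ≤ η :=
      hη ▸ ((le_max_left _ _).trans (le_max_right _ _)).trans (le_max_right _ _)
    linarith
  have hgη : PH.homotopyCost Sbar.carrier wS p m g ≤ 2 * η := by
    have : 1 / 2 * PH.homotopyCost Sbar.carrier wS p m g ≤ η :=
      hη ▸ ((le_max_right _ _).trans (le_max_right _ _)).trans (le_max_right _ _)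
    linarith
  have hφdis {i : ℕ} (hi : i ≤ p + 1) := PH.disN_le_of_maxDisN_le hφη hi
  have hψdis {i : ℕ} (hi : i ≤ p + 1) := PH.disN_le_of_maxDisN_le hψη hi
  refine ⟨fun δ _ => ⟨fun z hz => PH.find_mem_Zsub hφ (hφdis p.le_succ) hz,
      fun z hz => PH.find_mem_Bsub hφ (hφdis le_rfl) (hφdis p.le_succ) hz,
      fun z hz => PH.find_mem_Zsub hψ (hψdis p.le_succ) hz,
      fun z hz => PH.find_mem_Bsub hψ (hψdis le_rfl) (hψdis p.le_succ) hz⟩,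
    fun δ δ' _ hδδ' => ⟨PH.Zsub_mono (PH.subPC_mono _ _ hδδ') p,
      PH.Bsub_mono (PH.subPC_mono _ _ hδδ') p, PH.Zsub_mono (PH.subPC_mono _ _ hδδ') p,
      PH.Bsub_mono (PH.subPC_mono _ _ hδδ') p⟩,
    fun δ hδ => ⟨fun z hz => ?_, fun z hz => ?_⟩⟩
  · rw [PH.find_find, ← hf0]
    exact PH.find_sub_mem_Bsub_of_homotopyChain Pbar hfm hfstep hfη hδ hz
  · rw [PH.find_find, ← hg0]
    exact PH.find_sub_mem_Bsub_of_homotopyChain Sbar hgm hgstep hgη hδ hz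

theorem statement18 (K : Type) [Field K] (V W : Type) [Fintype V] [Fintype W]
    (P : PH.PathComplex V) (S : PH.PathComplex W)
    (h0P : ∀ v : V, [v] ∈ P.carrier) (h0S : ∀ w : W, [w] ∈ S.carrier)
    (wP : V → V → ℝ) (wS : W → W → ℝ)
    (hwP : ∀ a b : V, [a, b] ∈ P.carrier → 0 < wP a b)
    (hwS : ∀ a b : W, [a, b] ∈ S.carrier → 0 < wS a b)
    (p : ℕ)
    -- P̄ = Δ(P_p ∪ P_{p+1}) and S̄ = Δ(S_p ∪ S_{p+1})
    (Pbar : PH.PathComplex V) (Sbar : PH.PathComplex W)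
    (hPbar : Pbar = PH.genPC {l | l ∈ P.carrier ∧ (l.length = p + 1 ∨ l.length = p + 2)})
    (hSbar : Sbar = PH.genPC {l | l ∈ S.carrier ∧ (l.length = p + 1 ∨ l.length = p + 2)})
    (φ : V → W) (ψ : W → V)
    (hφ : PH.IsWeakMor Pbar.carrier Sbar.carrier φ)
    (hψ : PH.IsWeakMor Sbar.carrier Pbar.carrier ψ)
    (m : ℕ) (f : ℕ → V → V) (g : ℕ → W → W)
    (hf0 : f 0 = ψ ∘ φ) (hfm : f m = id)
    (hfwm : ∀ k : ℕ, k ≤ m → PH.IsWeakMor Pbar.carrier Pbar.carrier (f k))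
    (hfstep : ∀ k : ℕ, 1 ≤ k → k ≤ m →
        PH.WOneStep Pbar.carrier Pbar.carrier (f (k - 1)) (f k))
    (hg0 : g 0 = φ ∘ ψ) (hgm : g m = id)
    (hgwm : ∀ k : ℕ, k ≤ m → PH.IsWeakMor Sbar.carrier Sbar.carrier (g k))
    (hgstep : ∀ k : ℕ, 1 ≤ k → k ≤ m →
        PH.WOneStep Sbar.carrier Sbar.carrier (g (k - 1)) (g k))
    (η : ℝ)
    (hη : η = max
      (sSup (insert 0 {d : ℝ | ∃ i : ℕ, 1 ≤ i ∧ i ≤ p + 1 ∧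
          d = PH.disN Pbar.carrier wP wS φ i}))
      (max
      (sSup (insert 0 {d : ℝ | ∃ i : ℕ, 1 ≤ i ∧ i ≤ p + 1 ∧
          d = PH.disN Sbar.carrier wS wP ψ i}))
      (max
      ((1 / 2) * sSup (insert 0 {d : ℝ | ∃ k : ℕ, 1 ≤ k ∧ k ≤ m ∧
          d = sSup (insert 0 {d' : ℝ | ∃ l : ℕ, l ≤ p ∧
                d' = PH.disN Pbar.carrier wP wP (f (k - 1)) l +
                     PH.disN Pbar.carrier wP wP (f k) (p - l)}) +
              PH.codP Pbar.carrier wP (f (k - 1)) (f k)}))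
      ((1 / 2) * sSup (insert 0 {d : ℝ | ∃ k : ℕ, 1 ≤ k ∧ k ≤ m ∧
          d = sSup (insert 0 {d' : ℝ | ∃ l : ℕ, l ≤ p ∧
                d' = PH.disN Sbar.carrier wS wS (g (k - 1)) l +
                     PH.disN Sbar.carrier wS wS (g k) (p - l)}) +
              PH.codP Sbar.carrier wS (g (k - 1)) (g k)}))))) :
    -- the p-th persistence modules of P̄ and S̄ are η-interleaved via φ and ψ
    (∀ δ : ℝ, 0 ≤ δ →
      (∀ z : List V →₀ K, z ∈ PH.Zsub K (PH.subPC Pbar.carrier wP δ) p →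
          PH.find K φ z ∈ PH.Zsub K (PH.subPC Sbar.carrier wS (δ + η)) p) ∧
      (∀ z : List V →₀ K, z ∈ PH.Bsub K (PH.subPC Pbar.carrier wP δ) p →
          PH.find K φ z ∈ PH.Bsub K (PH.subPC Sbar.carrier wS (δ + η)) p) ∧
      (∀ z : List W →₀ K, z ∈ PH.Zsub K (PH.subPC Sbar.carrier wS δ) p →
          PH.find K ψ z ∈ PH.Zsub K (PH.subPC Pbar.carrier wP (δ + η)) p) ∧
      (∀ z : List W →₀ K, z ∈ PH.Bsub K (PH.subPC Sbar.carrier wS δ) p →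
          PH.find K ψ z ∈ PH.Bsub K (PH.subPC Pbar.carrier wP (δ + η)) p)) ∧
    -- the structure maps are induced by the inclusions
    (∀ δ δ' : ℝ, 0 ≤ δ → δ ≤ δ' →
      PH.Zsub K (PH.subPC Pbar.carrier wP δ) p ≤
        PH.Zsub K (PH.subPC Pbar.carrier wP δ') p ∧
      PH.Bsub K (PH.subPC Pbar.carrier wP δ) p ≤
        PH.Bsub K (PH.subPC Pbar.carrier wP δ') p ∧
      PH.Zsub K (PH.subPC Sbar.carrier wS δ) p ≤
        PH.Zsub K (PH.subPC Sbar.carrier wS δ') p ∧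
      PH.Bsub K (PH.subPC Sbar.carrier wS δ) p ≤
        PH.Bsub K (PH.subPC Sbar.carrier wS δ') p) ∧
    -- the composites equal the structure maps δ ≤ δ+2η on homology
    (∀ δ : ℝ, 0 ≤ δ →
      (∀ z : List V →₀ K, z ∈ PH.Zsub K (PH.subPC Pbar.carrier wP δ) p →
          PH.find K ψ (PH.find K φ z) - z ∈
            PH.Bsub K (PH.subPC Pbar.carrier wP (δ + 2 * η)) p) ∧
      (∀ z : List W →₀ K, z ∈ PH.Zsub K (PH.subPC Sbar.carrier wS δ) p →
          PH.find K φ (PH.find K ψ z) - z ∈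
            PH.Bsub K (PH.subPC Sbar.carrier wS (δ + 2 * η)) p)) :=
  statement18_general K V W wP wS p Pbar Sbar φ ψ hφ hψ m f g hf0 hfm hfstep hg0 hgm hgstep η hη
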